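/- Area normalization by regular homotopy: Every regular closed curve γ̄ = (x, y) : ℝ → ℝ² is regularly homotopic to a regular closed curve γ̄₁ = (x₁, y₁) satisfying ∫₀^{2π} x₁(s)·y₁'(s) ds = 0 (i.e., enclosing zero oriented area). -/

import Mathlib

open Real

noncomputable section

/-- A regular closed curve in the plane: continuously differentiable,
`2π`-periodic, with nowhere vanishing derivative. -/
def IsRegularClosedCurve (γ : ℝ → ℝ × ℝ) : Prop :=
  ContDiff ℝ 1 γ ∧ (∀ s, γ (s + 2 * π) = γ s) ∧ ∀ s, deriv γ s ≠ 0

/-- `γ` has rotation number `n`: there is a continuous angle function `θ` for the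
velocity vector with `θ (2π) - θ 0 = 2πn`. -/
def HasRotationNumber (γ : ℝ → ℝ × ℝ) (n : ℤ) : Prop :=
  ∃ θ : ℝ → ℝ, Continuous θ ∧
    (∀ s, deriv γ s = ‖deriv γ s‖ • (Real.cos (θ s), Real.sin (θ s))) ∧
    θ (2 * π) - θ 0 = 2 * π * (n : ℝ)

/-- A regular homotopy: a family of regular closed curves, jointly continuous
in `(s, t)` together with its `s`-derivative, for `t ∈ [0,1]`. -/
def IsRegularHomotopy (Γ : ℝ → ℝ → ℝ × ℝ) : Prop :=
  (∀ t ∈ Set.Icc (0:ℝ) 1, IsRegularClosedCurve (Γ t)) ∧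
  ContinuousOn (fun p : ℝ × ℝ => Γ p.2 p.1) (Set.univ ×ˢ Set.Icc (0:ℝ) 1) ∧
  ContinuousOn (fun p : ℝ × ℝ => deriv (Γ p.2) p.1) (Set.univ ×ˢ Set.Icc (0:ℝ) 1)

def RegularlyHomotopic (γ₀ γ₁ : ℝ → ℝ × ℝ) : Prop :=
  ∃ Γ : ℝ → ℝ → ℝ × ℝ, IsRegularHomotopy Γ ∧ Γ 0 = γ₀ ∧ Γ 1 = γ₁

/-- The coordinate functions of a space curve `γ = (x, y, z) : ℝ → ℝ³`. -/
def curveX (γ : ℝ → ℝ × ℝ × ℝ) : ℝ → ℝ := fun s => (γ s).1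
def curveY (γ : ℝ → ℝ × ℝ × ℝ) : ℝ → ℝ := fun s => (γ s).2.1
def curveZ (γ : ℝ → ℝ × ℝ × ℝ) : ℝ → ℝ := fun s => (γ s).2.2

/-- The Legendrian condition `z' + x·y' ≡ 0` for the standard contact
structure `ξ = ker (dz + x dy)` on `ℝ³`. -/
def IsLegendrian (γ : ℝ → ℝ × ℝ × ℝ) : Prop :=
  ∀ s, deriv (curveZ γ) s + curveX γ s * deriv (curveY γ) s = 0

/-- A regular closed Legendrian curve in `(ℝ³, ξ)`. -/
def IsRegularClosedLegendrian (γ : ℝ → ℝ × ℝ × ℝ) : Prop :=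
  ContDiff ℝ 1 γ ∧ (∀ s, γ (s + 2 * π) = γ s) ∧ (∀ s, deriv γ s ≠ 0) ∧ IsLegendrian γ

/-- The Lagrangian projection `(x, y, z) ↦ (x, y)`. -/
def LagrangianProj (γ : ℝ → ℝ × ℝ × ℝ) : ℝ → ℝ × ℝ :=
  fun s => ((γ s).1, (γ s).2.1)

/-- The rotation number of a Legendrian curve, measured in the frame
`e₁ = ∂ₓ`, `e₂ = ∂_y - x ∂_z` of `ξ`, in which `γ'` has coefficients `(x', y')`. -/
def HasLegendrianRotationNumber (γ : ℝ → ℝ × ℝ × ℝ) (n : ℤ) : Prop :=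
  ∃ θ : ℝ → ℝ, Continuous θ ∧
    (∀ s, (deriv (curveX γ) s, deriv (curveY γ) s) =
      ‖(deriv (curveX γ) s, deriv (curveY γ) s)‖ • (Real.cos (θ s), Real.sin (θ s))) ∧
    θ (2 * π) - θ 0 = 2 * π * (n : ℝ)

/-- A Legendrian regular homotopy: a family of regular closed Legendrian
curves, jointly continuous in `(s,t)` together with its `s`-derivative. -/
def IsLegendrianRegularHomotopy (Γ : ℝ → ℝ → ℝ × ℝ × ℝ) : Prop :=
  (∀ t ∈ Set.Icc (0:ℝ) 1, IsRegularClosedLegendrian (Γ t)) ∧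
  ContinuousOn (fun p : ℝ × ℝ => Γ p.2 p.1) (Set.univ ×ˢ Set.Icc (0:ℝ) 1) ∧
  ContinuousOn (fun p : ℝ × ℝ => deriv (Γ p.2) p.1) (Set.univ ×ˢ Set.Icc (0:ℝ) 1)

def LegendrianRegularlyHomotopic (γ₀ γ₁ : ℝ → ℝ × ℝ × ℝ) : Prop :=
  ∃ Γ : ℝ → ℝ → ℝ × ℝ × ℝ, IsLegendrianRegularHomotopy Γ ∧ Γ 0 = γ₀ ∧ Γ 1 = γ₁

/-!
Rotating `γ` about a centre `c` by a periodic angle `φ(s)` changes the oriented area by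
`½ ∫ φ' r`, where `r = |γ - c|²`, and keeps the curve regular as long as `r' ≠ 0` wherever
`φ' ≠ 0`: a velocity cancelled by the rotation term is orthogonal to `γ - c`. For
`c = γ(0) - γ'(0)` we get `r'(0) = 2|γ'(0)|² ≠ 0`, and `φ' = λ r'² (r - m)`, with `m` the
`r'²`-weighted mean of `r`, integrates to zero, vanishes where `r' = 0`, and gives
`∫ φ' r = λ ∫ (r' (r - m))² ≠ 0`. Choosing `λ` cancels the area, and rotating by `t φ`,
`t ∈ [0, 1]`, is the regular homotopy.
-/

open Function

def planeRotation (θ : ℝ) (v : ℝ × ℝ) : ℝ × ℝ :=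
  (v.1 * cos θ - v.2 * sin θ, v.1 * sin θ + v.2 * cos θ)

def perp (v : ℝ × ℝ) : ℝ × ℝ := (-v.2, v.1)

def orientedArea (γ : ℝ → ℝ × ℝ) : ℝ :=
  ∫ s in (0:ℝ)..(2 * π), (γ s).1 * deriv (fun u => (γ u).2) s

def rotateAbout (c : ℝ × ℝ) (φ : ℝ → ℝ) (γ : ℝ → ℝ × ℝ) : ℝ → ℝ × ℝ :=
  fun s => c + planeRotation (φ s) (γ s - c)

section PlaneRotation

@[simp]
theorem planeRotation_zero (v : ℝ × ℝ) : planeRotation 0 v = v := by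
  simp [planeRotation]

theorem planeRotation_eq_zero_iff {θ : ℝ} {v : ℝ × ℝ} : planeRotation θ v = 0 ↔ v = 0 := by
  refine ⟨fun h => ?_, fun h => by simp [h, planeRotation]⟩
  have h₁ : v.1 * cos θ - v.2 * sin θ = 0 := congrArg Prod.fst h
  have h₂ : v.1 * sin θ + v.2 * cos θ = 0 := congrArg Prod.snd h
  refine Prod.ext ?_ ?_ <;> simp only [Prod.fst_zero, Prod.snd_zero]
  · linear_combination cos θ * h₁ + sin θ * h₂ - v.1 * sin_sq_add_cos_sq θ
  · linear_combination -sin θ * h₁ + cos θ * h₂ - v.2 * sin_sq_add_cos_sq θ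

theorem cross_planeRotation (θ : ℝ) (v w : ℝ × ℝ) :
    (planeRotation θ v).1 * (planeRotation θ w).2 - (planeRotation θ v).2 * (planeRotation θ w).1
      = v.1 * w.2 - v.2 * w.1 := by
  simp only [planeRotation]
  linear_combination (v.1 * w.2 - v.2 * w.1) * sin_sq_add_cos_sq θ

theorem dot_eq_zero_of_add_smul_perp_eq_zero {v w : ℝ × ℝ} {a : ℝ} (h : w + a • perp v = 0) :
    v.1 * w.1 + v.2 * w.2 = 0 := by
  have h₁ : w.1 - a * v.2 = 0 := by simpa [perp, sub_eq_add_neg] using congrArg Prod.fst h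
  have h₂ : w.2 + a * v.1 = 0 := by simpa [perp] using congrArg Prod.snd h
  linear_combination v.1 * h₁ + v.2 * h₂

@[fun_prop]
theorem Continuous.planeRotation {X : Type*} [TopologicalSpace X] {θ : X → ℝ} {p : X → ℝ × ℝ}
    (hθ : Continuous θ) (hp : Continuous p) :
    Continuous fun x => planeRotation (θ x) (p x) := by
  unfold _root_.planeRotation
  fun_prop

@[fun_prop]
theorem Continuous.perp {X : Type*} [TopologicalSpace X] {p : X → ℝ × ℝ} (hp : Continuous p) :
    Continuous fun x => perp (p x) := by
  unfold _root_.perp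
  fun_prop

@[fun_prop]
theorem ContDiff.planeRotation {n : WithTop ℕ∞} {θ : ℝ → ℝ} {p : ℝ → ℝ × ℝ}
    (hθ : ContDiff ℝ n θ) (hp : ContDiff ℝ n p) :
    ContDiff ℝ n fun s => planeRotation (θ s) (p s) := by
  unfold _root_.planeRotation
  fun_prop

theorem HasDerivAt.planeRotation {θ : ℝ → ℝ} {p : ℝ → ℝ × ℝ} {θ' s : ℝ} {p' : ℝ × ℝ}
    (hθ : HasDerivAt θ θ' s) (hp : HasDerivAt p p' s) :
    HasDerivAt (fun s => planeRotation (θ s) (p s))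
      (planeRotation (θ s) (p' + θ' • perp (p s))) s := by
  have h₁ : HasDerivAt (fun s => (p s).1) p'.1 s := hp.fst
  have h₂ : HasDerivAt (fun s => (p s).2) p'.2 s := hp.snd
  refine (((h₁.mul hθ.cos).sub (h₂.mul hθ.sin)).prodMk
    ((h₁.mul hθ.sin).add (h₂.mul hθ.cos))).congr_deriv ?_
  simp only [_root_.planeRotation, perp, Prod.fst_add, Prod.snd_add, Prod.smul_fst, Prod.smul_snd,
    smul_eq_mul, Prod.mk.injEq]
  constructor <;> ring

end PlaneRotation

namespace Function.Periodic

variable {T : ℝ}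

protected theorem deriv {E : Type*} [NormedAddCommGroup E] [NormedSpace ℝ E] {f : ℝ → E}
    (h : Periodic f T) : Periodic (deriv f) T := fun x => by
  rw [← deriv_comp_add_const, h.funext]

theorem intervalIntegral_deriv_eq_zero {E : Type*} [NormedAddCommGroup E] [NormedSpace ℝ E]
    [CompleteSpace E] {f : ℝ → E} (h : Periodic f T) (hf : ContDiff ℝ 1 f) :
    ∫ s in (0:ℝ)..T, deriv f s = 0 := by
  rw [intervalIntegral.integral_eq_sub_of_hasDerivAt
    (fun s _ => (hf.differentiable one_ne_zero s).hasDerivAt)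
    ((hf.continuous_deriv le_rfl).intervalIntegrable _ _)]
  simpa using congrArg (· - f 0) (h 0)

theorem intervalIntegral_sq_pos {g : ℝ → ℝ} (h : Periodic g T) (hT : 0 < T) (hg : Continuous g)
    (hne : g ≠ 0) : 0 < ∫ s in (0:ℝ)..T, g s ^ 2 := by
  obtain ⟨s, hs⟩ := Function.ne_iff.mp hne
  obtain ⟨y, hy, hsy⟩ := h.exists_mem_Ico₀ hT s
  refine intervalIntegral.integral_pos hT (by fun_prop) (fun _ _ => sq_nonneg _)
    ⟨y, Set.Ico_subset_Icc_self hy, ?_⟩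
  rw [← hsy]
  exact sq_pos_of_ne_zero hs

theorem periodic_primitive_of_intervalIntegral_eq_zero {g : ℝ → ℝ} (h : Periodic g T)
    (hg : Continuous g) (h₀ : ∫ s in (0:ℝ)..T, g s = 0) :
    Periodic (fun t => ∫ s in (0:ℝ)..t, g s) T := fun t => by
  simp only [h.intervalIntegral_add_eq_add 0 t (fun _ _ => hg.intervalIntegrable _ _), zero_add,
    h₀, add_zero]

end Function.Periodic

theorem exists_deriv_mul_sub_ne_zero {r : ℝ → ℝ} (hr : Differentiable ℝ r) (hne : deriv r ≠ 0)
    (m : ℝ) : ∃ s, deriv r s * (r s - m) ≠ 0 := by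
  by_contra! h
  obtain ⟨s₀, hs₀⟩ := Function.ne_iff.mp hne
  -- `deriv r * (r - m)` is half the derivative of `(r - m) ^ 2`, which is therefore constant
  have hconst : ∀ s, (r s - m) ^ 2 = (r s₀ - m) ^ 2 := fun s =>
    is_const_of_deriv_eq_zero (f := fun s => (r s - m) ^ 2) (by fun_prop) (fun s => by
      rw [(((hr s).hasDerivAt.sub_const m).fun_pow 2).deriv]
      linear_combination 2 * h s) s s₀
  have hm : r s₀ = m := by
    simpa [sub_eq_zero] using (mul_eq_zero.mp (h s₀)).resolve_left hs₀
  have hr_const : r = fun _ => m := funext fun s => by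
    simpa [hm, sub_eq_zero] using hconst s
  exact hs₀ (by simp [hr_const])

theorem exists_periodic_angle {T : ℝ} (hT : 0 < T) {r : ℝ → ℝ} (hr : ContDiff ℝ 1 r)
    (hper : Periodic r T) (hne : deriv r ≠ 0) (I : ℝ) :
    ∃ φ : ℝ → ℝ, ContDiff ℝ 1 φ ∧ Periodic φ T ∧ (∀ s, deriv φ s ≠ 0 → deriv r s ≠ 0) ∧
      ∫ s in (0:ℝ)..T, deriv φ s * r s = I := by
  set r' := deriv r
  have hr' : Continuous r' := hr.continuous_deriv le_rfl
  have hr'per : Periodic r' T := hper.deriv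
  set m := (∫ s in (0:ℝ)..T, r' s ^ 2 * r s) / ∫ s in (0:ℝ)..T, r' s ^ 2
  set k : ℝ → ℝ := fun s => r' s * (r s - m)
  set g : ℝ → ℝ := fun s => r' s * k s
  have hk : Continuous k := by fun_prop
  have hg : Continuous g := by fun_prop
  have hg₀ : ∫ s in (0:ℝ)..T, g s = 0 := by
    have hpos := hr'per.intervalIntegral_sq_pos hT hr' hne
    calc ∫ s in (0:ℝ)..T, g s
        = (∫ s in (0:ℝ)..T, r' s ^ 2 * r s) - m * ∫ s in (0:ℝ)..T, r' s ^ 2 := by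
          rw [← intervalIntegral.integral_const_mul, ← intervalIntegral.integral_sub
            (by apply Continuous.intervalIntegrable; fun_prop)
            (by apply Continuous.intervalIntegrable; fun_prop)]
          exact intervalIntegral.integral_congr fun s _ => by simp only [g, k]; ring
      _ = 0 := by simp only [m]; field_simp; ring
  have hkper : Periodic k T := fun s => by simp only [k, hr'per s, hper s]
  have hgper : Periodic g T := fun s => by simp only [g, hr'per s, hkper s]
  have hJ : 0 < ∫ s in (0:ℝ)..T, g s * r s := by
    obtain ⟨s, hs⟩ := exists_deriv_mul_sub_ne_zero (hr.differentiable one_ne_zero) hne m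
    calc 0 < ∫ s in (0:ℝ)..T, k s ^ 2 :=
          hkper.intervalIntegral_sq_pos hT hk (Function.ne_iff.mpr ⟨s, hs⟩)
      _ = (∫ s in (0:ℝ)..T, k s ^ 2) + m * ∫ s in (0:ℝ)..T, g s := by rw [hg₀, mul_zero, add_zero]
      _ = ∫ s in (0:ℝ)..T, g s * r s := by
          rw [← intervalIntegral.integral_const_mul, ← intervalIntegral.integral_add
            (by apply Continuous.intervalIntegrable; fun_prop)
            (by apply Continuous.intervalIntegrable; fun_prop)]
          exact intervalIntegral.integral_congr fun s _ => by simp only [g, k]; ring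
  set J := ∫ s in (0:ℝ)..T, g s * r s
  set φ : ℝ → ℝ := fun t => I / J * ∫ s in (0:ℝ)..t, g s
  have hφ : ∀ s, HasDerivAt φ (I / J * g s) s := fun s =>
    ((hg.integral_hasStrictDerivAt 0 s).hasDerivAt).const_mul (I / J)
  have hφ' : deriv φ = fun s => I / J * g s := funext fun s => (hφ s).deriv
  refine ⟨φ, contDiff_one_iff_deriv.mpr ⟨fun s => (hφ s).differentiableAt, ?_⟩, fun t => ?_,
    fun s hs => ?_, ?_⟩
  · rw [hφ']
    fun_prop
  · exact congrArg (I / J * ·) (hgper.periodic_primitive_of_intervalIntegral_eq_zero hg hg₀ t)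
  · rw [hφ'] at hs
    exact left_ne_zero_of_mul (right_ne_zero_of_mul hs)
  · simp only [hφ', mul_assoc]
    rw [intervalIntegral.integral_const_mul]
    field_simp
    rfl

section PlaneCurve

variable {γ : ℝ → ℝ × ℝ}

theorem orientedArea_add_const (hγ : ContDiff ℝ 1 γ) (hper : Periodic γ (2 * π)) (c : ℝ × ℝ) :
    orientedArea (fun s => γ s + c) = orientedArea γ := by
  have hy : ContDiff ℝ 1 fun s => (γ s).2 := hγ.snd
  have hyper : Periodic (fun s => (γ s).2) (2 * π) := hper.comp Prod.snd
  unfold orientedArea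
  simp only [Prod.fst_add, Prod.snd_add, deriv_add_const, add_mul]
  rw [intervalIntegral.integral_add
    (by apply Continuous.intervalIntegrable; have := hy.continuous_deriv le_rfl; fun_prop)
    (by apply Continuous.intervalIntegrable; have := hy.continuous_deriv le_rfl; fun_prop),
    intervalIntegral.integral_const_mul, hyper.intervalIntegral_deriv_eq_zero hy, mul_zero,
    add_zero]

theorem orientedArea_eq_half_integral_cross (hγ : ContDiff ℝ 1 γ) (hper : Periodic γ (2 * π)) :
    orientedArea γ =
      1 / 2 * ∫ s in (0:ℝ)..(2 * π), ((γ s).1 * (deriv γ s).2 - (γ s).2 * (deriv γ s).1) := by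
  have hγ' : Continuous (deriv γ) := hγ.continuous_deriv le_rfl
  have hd : ∀ s, HasDerivAt γ (deriv γ s) s := fun s =>
    (hγ.differentiable one_ne_zero s).hasDerivAt
  have hd₁ : ∀ s, HasDerivAt (fun u => (γ u).1) (deriv γ s).1 s := fun s => (hd s).fst
  have hd₂ : ∀ s, HasDerivAt (fun u => (γ u).2) (deriv γ s).2 s := fun s => (hd s).snd
  have hxy : ∫ s in (0:ℝ)..(2 * π), ((deriv γ s).1 * (γ s).2 + (γ s).1 * (deriv γ s).2) = 0 := by
    have := Periodic.intervalIntegral_deriv_eq_zero (f := fun u => (γ u).1 * (γ u).2) (T := 2 * π)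
      (fun s => by simp only [hper s]) (by fun_prop)
    rwa [funext fun s => ((hd₁ s).fun_mul (hd₂ s)).deriv] at this
  calc orientedArea γ
      = ∫ s in (0:ℝ)..(2 * π), (1 / 2 * ((γ s).1 * (deriv γ s).2 - (γ s).2 * (deriv γ s).1) +
          1 / 2 * ((deriv γ s).1 * (γ s).2 + (γ s).1 * (deriv γ s).2)) :=
        intervalIntegral.integral_congr fun s _ => by simp only [(hd₂ s).deriv]; ring
    _ = _ := by
        rw [intervalIntegral.integral_add (by apply Continuous.intervalIntegrable; fun_prop)
          (by apply Continuous.intervalIntegrable; fun_prop), intervalIntegral.integral_const_mul,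
          intervalIntegral.integral_const_mul, hxy, mul_zero, add_zero]

theorem orientedArea_planeRotation (hγ : ContDiff ℝ 1 γ) (hper : Periodic γ (2 * π))
    {θ : ℝ → ℝ} (hθ : ContDiff ℝ 1 θ) (hθper : Periodic θ (2 * π)) :
    orientedArea (fun s => planeRotation (θ s) (γ s)) =
      orientedArea γ + 1 / 2 * ∫ s in (0:ℝ)..(2 * π), deriv θ s * ((γ s).1 ^ 2 + (γ s).2 ^ 2) := by
  have hγ' : Continuous (deriv γ) := hγ.continuous_deriv le_rfl
  have hθ' : Continuous (deriv θ) := hθ.continuous_deriv le_rfl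
  have hd : ∀ s, deriv (fun s => planeRotation (θ s) (γ s)) s =
      planeRotation (θ s) (deriv γ s + deriv θ s • perp (γ s)) := fun s =>
    ((hθ.differentiable one_ne_zero s).hasDerivAt.planeRotation
      (hγ.differentiable one_ne_zero s).hasDerivAt).deriv
  rw [orientedArea_eq_half_integral_cross (by fun_prop) (fun s => by simp only [hper s, hθper s]),
    orientedArea_eq_half_integral_cross hγ hper, ← mul_add, ← intervalIntegral.integral_add
    (by apply Continuous.intervalIntegrable; fun_prop)
    (by apply Continuous.intervalIntegrable; fun_prop)]
  congr 1
  refine intervalIntegral.integral_congr fun s _ => ?_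
  simp only [hd, cross_planeRotation, perp, Prod.fst_add, Prod.snd_add, Prod.smul_fst,
    Prod.smul_snd, smul_eq_mul]
  ring

end PlaneCurve

theorem hasDerivAt_sq_add_sq_sub {γ : ℝ → ℝ × ℝ} {γ' : ℝ × ℝ} {s : ℝ} (c : ℝ × ℝ)
    (hγ : HasDerivAt γ γ' s) :
    HasDerivAt (fun u => (γ u - c).1 ^ 2 + (γ u - c).2 ^ 2)
      (2 * ((γ s - c).1 * γ'.1 + (γ s - c).2 * γ'.2)) s := by
  have h₁ : HasDerivAt (fun u => (γ u - c).1) γ'.1 s := (hγ.sub_const c).fst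
  have h₂ : HasDerivAt (fun u => (γ u - c).2) γ'.2 s := (hγ.sub_const c).snd
  refine ((h₁.fun_pow 2).fun_add (h₂.fun_pow 2)).congr_deriv ?_
  push_cast
  ring

section RotateAbout

variable {γ : ℝ → ℝ × ℝ} {φ : ℝ → ℝ}

theorem hasDerivAt_rotateAbout (c : ℝ × ℝ) {φ' s : ℝ} {γ' : ℝ × ℝ} (hφ : HasDerivAt φ φ' s)
    (hγ : HasDerivAt γ γ' s) :
    HasDerivAt (rotateAbout c φ γ) (planeRotation (φ s) (γ' + φ' • perp (γ s - c))) s :=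
  (hφ.planeRotation (hγ.sub_const c)).const_add c

theorem orientedArea_rotateAbout (hγ : ContDiff ℝ 1 γ) (hper : Periodic γ (2 * π)) (c : ℝ × ℝ)
    (hφ : ContDiff ℝ 1 φ) (hφper : Periodic φ (2 * π)) :
    orientedArea (rotateAbout c φ γ) = orientedArea γ +
      1 / 2 * ∫ s in (0:ℝ)..(2 * π), deriv φ s * ((γ s - c).1 ^ 2 + (γ s - c).2 ^ 2) := by
  have hsub : ContDiff ℝ 1 fun s => γ s - c := by fun_prop
  have hsubper : Periodic (fun s => γ s - c) (2 * π) := fun s => by simp only [hper s]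
  have hrot := orientedArea_planeRotation hsub hsubper hφ hφper
  have h₁ := orientedArea_add_const (ContDiff.planeRotation hφ hsub)
    (fun s => by simp only [hsubper s, hφper s]) c
  have h₂ := orientedArea_add_const hγ hper (-c)
  simp only [← sub_eq_add_neg] at h₂
  rw [← h₂, ← hrot, ← h₁]
  exact congrArg orientedArea (funext fun s => add_comm _ _)

theorem isRegularClosedCurve_rotateAbout (hγ : IsRegularClosedCurve γ) (c : ℝ × ℝ)
    (hφ : ContDiff ℝ 1 φ) (hφper : Periodic φ (2 * π))
    (hφγ : ∀ s, deriv φ s ≠ 0 → (γ s - c).1 * (deriv γ s).1 + (γ s - c).2 * (deriv γ s).2 ≠ 0) :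
    IsRegularClosedCurve (rotateAbout c φ γ) := by
  obtain ⟨hγ₁, hper, hreg⟩ := hγ
  refine ⟨by unfold rotateAbout; fun_prop, fun s => by simp only [rotateAbout, hper s, hφper s],
    fun s h => ?_⟩
  rw [(hasDerivAt_rotateAbout c (hφ.differentiable one_ne_zero s).hasDerivAt
    (hγ₁.differentiable one_ne_zero s).hasDerivAt).deriv, planeRotation_eq_zero_iff] at h
  by_cases hφ₀ : deriv φ s = 0
  · exact hreg s (by simpa [hφ₀] using h)
  · exact hφγ s hφ₀ (dot_eq_zero_of_add_smul_perp_eq_zero h)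

theorem isRegularHomotopy_rotateAbout (hγ : IsRegularClosedCurve γ) (c : ℝ × ℝ)
    (hφ : ContDiff ℝ 1 φ) (hφper : Periodic φ (2 * π))
    (hφγ : ∀ s, deriv φ s ≠ 0 → (γ s - c).1 * (deriv γ s).1 + (γ s - c).2 * (deriv γ s).2 ≠ 0) :
    IsRegularHomotopy fun t => rotateAbout c (fun s => t * φ s) γ := by
  have hφc : Continuous φ := hφ.continuous
  have hφ' : Continuous (deriv φ) := hφ.continuous_deriv le_rfl
  have hγc : Continuous γ := hγ.1.continuous
  have hγ' : Continuous (deriv γ) := hγ.1.continuous_deriv le_rfl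
  have hd : ∀ t s, deriv (rotateAbout c (fun s => t * φ s) γ) s =
      planeRotation (t * φ s) (deriv γ s + (t * deriv φ s) • perp (γ s - c)) := fun t s =>
    (hasDerivAt_rotateAbout c ((hφ.differentiable one_ne_zero s).hasDerivAt.const_mul t)
      (hγ.1.differentiable one_ne_zero s).hasDerivAt).deriv
  refine ⟨fun t _ => isRegularClosedCurve_rotateAbout hγ c (by fun_prop)
    (fun s => by simp only [hφper s]) fun s hs => hφγ s ?_, ?_, ?_⟩
  · rw [deriv_const_mul _ (hφ.differentiable one_ne_zero s)] at hs
    exact right_ne_zero_of_mul hs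
  · apply Continuous.continuousOn
    unfold rotateAbout
    fun_prop
  · simp only [hd]
    apply Continuous.continuousOn
    fun_prop

end RotateAbout

/-- **Area normalization:** every regular closed plane curve is regularly
homotopic to one enclosing zero oriented area, `∫₀^{2π} x₁·y₁' = 0`. -/
theorem regularlyHomotopic_to_zero_area (γ : ℝ → ℝ × ℝ)
    (h : IsRegularClosedCurve γ) :
    ∃ γ₁ : ℝ → ℝ × ℝ, IsRegularClosedCurve γ₁ ∧ RegularlyHomotopic γ γ₁ ∧
      (∫ s in (0:ℝ)..(2 * π), (γ₁ s).1 * deriv (fun u => (γ₁ u).2) s) = 0 := by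
  have hγ : ContDiff ℝ 1 γ := h.1
  have hper : Periodic γ (2 * π) := h.2.1
  set c := γ 0 - deriv γ 0
  set r : ℝ → ℝ := fun s => (γ s - c).1 ^ 2 + (γ s - c).2 ^ 2
  have hr : ∀ s, deriv r s =
      2 * ((γ s - c).1 * (deriv γ s).1 + (γ s - c).2 * (deriv γ s).2) := fun s =>
    (hasDerivAt_sq_add_sq_sub c (hγ.differentiable one_ne_zero s).hasDerivAt).deriv
  have hr₀ : deriv r 0 ≠ 0 := by
    rw [hr 0, show γ 0 - c = deriv γ 0 from sub_sub_cancel _ _]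
    refine mul_ne_zero two_ne_zero fun h₀ => h.2.2 0 ?_
    obtain ⟨h₁, h₂⟩ := mul_self_add_mul_self_eq_zero.mp h₀
    exact Prod.ext h₁ h₂
  obtain ⟨φ, hφ, hφper, hφr, hφI⟩ := exists_periodic_angle two_pi_pos (r := r) (by fun_prop)
    (fun s => by simp only [r, hper s]) (Function.ne_iff.mpr ⟨0, hr₀⟩) (-2 * orientedArea γ)
  have hφγ : ∀ s, deriv φ s ≠ 0 →
      (γ s - c).1 * (deriv γ s).1 + (γ s - c).2 * (deriv γ s).2 ≠ 0 := fun s hs =>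
    right_ne_zero_of_mul ((hr s).symm ▸ hφr s hs)
  refine ⟨rotateAbout c φ γ, isRegularClosedCurve_rotateAbout h c hφ hφper hφγ,
    ⟨_, isRegularHomotopy_rotateAbout h c hφ hφper hφγ, ?_, ?_⟩, ?_⟩
  · funext s
    simp [rotateAbout]
  · simp only [one_mul]
  · change orientedArea _ = 0
    rw [orientedArea_rotateAbout hγ hper c hφ hφper, hφI]
    ring
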